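/- Let H > 0 and M ≥ 2. If r satisfies H/√((π²/16)M^{2+ε/2} − 1) < r < H/√((π²/4)M^{2p+ε/2} − 1) with both radicands positive, then θ with sinθ = r/√(r²+H²) satisfies |sin((πM/2) sinθ)| > 1/M^{ε/4}·(using |sin x|>|x|/2) is implied by 4/(πM^{1+ε/4}) < sinθ, and |sin((π/2) sinθ)| < 1/M^{p+ε/4} is implied by sinθ < 2/(πM^{p+ε/4}). -/

import Mathlib

open Real

/-!
Lower bound: on `[0, π/2]` Jordan's inequality
`sin x ≥ 2x/π > x/2` applies to `x = (πM/2) s ≤ 1`, and `s > 4/(π M^{1+ε/4})` makes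
`x/2 > 1/M^{ε/4}`. Upper bound: `|sin x| ≤ |x|`, and `s < 2/(π M^{p+ε/4})` makes
`(π/2) s < 1/M^{p+ε/4}`; here `s ≥ 0` because the lower distance bound forces `r > 0`.
-/

lemma half_lt_sin {x : ℝ} (hx₀ : 0 < x) (hx : x ≤ π / 2) : x / 2 < sin x := by
  have half_lt : x / 2 < 2 / π * x := by
    have : (1 : ℝ) / 2 < 2 / π := by
      rw [div_lt_div_iff₀ two_pos pi_pos]
      linarith [pi_lt_four]
    nlinarith
  exact half_lt.trans_le (mul_le_sin hx₀.le hx)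

lemma inv_rpow_lt_abs_sin_of_lt {M t s : ℝ} (hM : 0 < M)
    (hs : 4 / (π * M ^ (1 + t)) < s) (harg : π * M / 2 * s ≤ 1) :
    1 / M ^ t < |sin (π * M / 2 * s)| := by
  set x := π * M / 2 * s
  have hMt : 0 < M ^ t := rpow_pos_of_pos hM t
  have scale : π * M / 2 * (4 / (π * M ^ (1 + t))) = 2 / M ^ t := by
    rw [rpow_add hM, rpow_one]
    field_simp
    ring
  have hx : 2 / M ^ t < x := scale ▸ mul_lt_mul_of_pos_left hs (by positivity)
  have hx₀ : 0 < x := lt_trans (by positivity) hx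
  have hsin : x / 2 < sin x := half_lt_sin hx₀ (harg.trans (by linarith [pi_gt_three]))
  have half_x : 1 / M ^ t < x / 2 := by linarith [show 2 / M ^ t = 2 * (1 / M ^ t) by ring]
  rw [abs_of_pos (by linarith)]
  exact half_x.trans hsin

lemma abs_sin_lt_inv_rpow_of_lt {M q s : ℝ} (hs₀ : 0 ≤ s) (hs : s < 2 / (π * M ^ q)) :
    |sin (π / 2 * s)| < 1 / M ^ q :=
  calc |sin (π / 2 * s)| ≤ |π / 2 * s| := abs_sin_le_abs
    _ = π / 2 * s := abs_of_nonneg (by positivity)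
    _ < π / 2 * (2 / (π * M ^ q)) := mul_lt_mul_of_pos_left hs (by positivity)
    _ = 1 / M ^ q := by field_simp

theorem fejer_phi_zero_case_general (H : ℝ) (hH : 0 < H) (M : ℕ) (hM : 2 ≤ M) (p ε : ℝ)
    (r : ℝ)
    (hra : H / Real.sqrt (Real.pi ^ 2 / 16 * (M : ℝ) ^ (2 + ε / 2) - 1) < r)
    (s : ℝ) (hs : s = r / Real.sqrt (r ^ 2 + H ^ 2))
    (harg : Real.pi * M / 2 * s ≤ 1) :
    (4 / (Real.pi * (M : ℝ) ^ (1 + ε / 4)) < s →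
        |Real.sin (Real.pi * M / 2 * s)| > 1 / (M : ℝ) ^ (ε / 4)) ∧
    (s < 2 / (Real.pi * (M : ℝ) ^ (p + ε / 4)) →
        |Real.sin (Real.pi / 2 * s)| < 1 / (M : ℝ) ^ (p + ε / 4)) := by
  have hM₀ : (0 : ℝ) < M := by exact_mod_cast (by omega : 0 < M)
  have hr : 0 < r := (div_nonneg hH.le (sqrt_nonneg _)).trans_lt hra
  have hs₀ : 0 ≤ s := hs ▸ div_nonneg hr.le (sqrt_nonneg _)
  exact ⟨fun h => inv_rpow_lt_abs_sin_of_lt hM₀ h harg,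
    fun h => abs_sin_lt_inv_rpow_of_lt hs₀ h⟩

/-- The φ = 0 case of Theorem 1: under the displayed distance bounds, the two
sine inequalities needed for the 1D Fejér-kernel beam gain hold, each implied by the
corresponding bound on `sin θ = r/√(r²+H²)`. -/
theorem fejer_phi_zero_case (H : ℝ) (hH : 0 < H) (M : ℕ) (hM : 2 ≤ M) (p ε : ℝ)
    (hp : 0 < p) (hp1 : p < 1) (hε : 0 < ε)
    (hrad1 : 0 < Real.pi ^ 2 / 16 * (M : ℝ) ^ (2 + ε / 2) - 1)
    (hrad2 : 0 < Real.pi ^ 2 / 4 * (M : ℝ) ^ (2 * p + ε / 2) - 1)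
    (r : ℝ)
    (hra : H / Real.sqrt (Real.pi ^ 2 / 16 * (M : ℝ) ^ (2 + ε / 2) - 1) < r)
    (hrb : r < H / Real.sqrt (Real.pi ^ 2 / 4 * (M : ℝ) ^ (2 * p + ε / 2) - 1))
    (s : ℝ) (hs : s = r / Real.sqrt (r ^ 2 + H ^ 2))
    (harg : Real.pi * M / 2 * s ≤ 1) :
    (4 / (Real.pi * (M : ℝ) ^ (1 + ε / 4)) < s →
        |Real.sin (Real.pi * M / 2 * s)| > 1 / (M : ℝ) ^ (ε / 4)) ∧
    (s < 2 / (Real.pi * (M : ℝ) ^ (p + ε / 4)) →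
        |Real.sin (Real.pi / 2 * s)| < 1 / (M : ℝ) ^ (p + ε / 4)) :=
  fejer_phi_zero_case_general H hH M hM p ε r hra s hs harg
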